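/- Let L, R, k be positive integers, χ > 0, Φ ∈ ℂ^{L×k} and Ψ ∈ ℂ^{R×k}. Assume the uniform overlap condition for both matrices: s_min(Φ) ≥ ‖Φ‖_F/((1+χ)·√k) and s_min(Ψ) ≥ ‖Ψ‖_F/((1+χ)·√k). Define p_min = min_{m∈[k]} ‖Φ_{:,m}‖·‖Ψ_{:,m}‖. Then every one of the k largest singular values of Φ·Ψᴴ is at least p_min/(1+χ)²; in particular s_k(Φ·Ψᴴ) ≥ p_min/(1+χ)². -/

import Mathlib

/-! On the `k`-dimensional range of `Ψ` the matrix `Φ Ψᴴ` stretches every vector by at least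
`s_min(Φ) s_min(Ψ)`: `ΨᴴΨ` stretches `Ψ v` by `s_min(Ψ)`, then `Φ` stretches `ΨᴴΨ v` by
`s_min(Φ)`. By the min-max principle, `(Φ Ψᴴ)ᴴ (Φ Ψᴴ)` therefore has at least `k` eigenvalues
`≥ (s_min(Φ) s_min(Ψ))²`. The overlap conditions give `p_min / (1+χ)² ≤ s_min(Φ) s_min(Ψ)`,
because `k p_min ≤ ∑_m ‖Φ_{:,m}‖ ‖Ψ_{:,m}‖ ≤ ‖Φ‖_F ‖Ψ‖_F` by Cauchy–Schwarz. -/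

open Matrix

/-- Frobenius norm of a complex matrix. -/
noncomputable def frob {m n : Type*} [Fintype m] [Fintype n] (A : Matrix m n ℂ) : ℝ :=
  Real.sqrt (∑ i, ∑ j, ‖A i j‖ ^ 2)

/-- Euclidean norm of the `m`-th column of a matrix. -/
noncomputable def colNorm {l m : Type*} [Fintype l] (A : Matrix l m ℂ) (j : m) : ℝ :=
  Real.sqrt (∑ i, ‖A i j‖ ^ 2)

/-- Smallest singular value of a matrix `A` with `n` columns: the square root of the
smallest eigenvalue of the Hermitian PSD matrix `AᴴA`. -/
noncomputable def smin {l : Type*} [Fintype l] {n : ℕ} (hn : 0 < n)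
    (A : Matrix l (Fin n) ℂ) : ℝ :=
  Real.sqrt (Finset.univ.inf' (Finset.univ_nonempty_iff.mpr ⟨⟨0, hn⟩⟩)
    (Matrix.isHermitian_conjTranspose_mul_self A).eigenvalues)

/-- The singular values of a complex matrix with `R` columns (unordered). -/
noncomputable def sv {l : Type*} [Fintype l] {R : ℕ} (A : Matrix l (Fin R) ℂ) (j : Fin R) : ℝ :=
  Real.sqrt ((Matrix.isHermitian_conjTranspose_mul_self A).eigenvalues j)

/-- The `j`-th largest value of the tuple `f` (with `j = 0` giving the largest). -/
noncomputable def nthLargest {n : ℕ} (f : Fin n → ℝ) (j : Fin n) : ℝ :=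
  (f ∘ Tuple.sort f) j.rev

namespace Matrix

variable {l n r : Type*} [Fintype l] [Fintype n] [Fintype r]

lemma re_star_dotProduct_self (x : n → ℂ) : (star x ⬝ᵥ x).re = ∑ i, ‖x i‖ ^ 2 := by
  simp [dotProduct, Complex.re_sum, Complex.conj_mul', ← Complex.ofReal_pow]

lemma re_star_dotProduct_conjTranspose_mul_self_mulVec (A : Matrix l n ℂ) (x : n → ℂ) :
    (star x ⬝ᵥ (Aᴴ * A) *ᵥ x).re = ∑ i, ‖(A *ᵥ x) i‖ ^ 2 := by
  rw [← mulVec_mulVec, dotProduct_mulVec, ← star_mulVec, re_star_dotProduct_self]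

variable [DecidableEq n]

lemma star_star_mulVec_dotProduct_star_mulVec {U : Matrix n n ℂ} (hU : U ∈ unitaryGroup n ℂ)
    (x y : n → ℂ) : star (star U *ᵥ x) ⬝ᵥ (star U *ᵥ y) = star x ⬝ᵥ y := by
  rw [star_mulVec, ← dotProduct_mulVec, mulVec_mulVec, ← star_eq_conjTranspose, star_star,
    Unitary.mul_star_self_of_mem hU, one_mulVec]

section IsHermitian

variable {M : Matrix n n ℂ} (hM : M.IsHermitian)

lemma IsHermitian.star_eigenvectorUnitary_mulVec_mulVec (x : n → ℂ) (i : n) :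
    (star (hM.eigenvectorUnitary : Matrix n n ℂ) *ᵥ (M *ᵥ x)) i
      = hM.eigenvalues i * (star (hM.eigenvectorUnitary : Matrix n n ℂ) *ᵥ x) i := by
  set U : Matrix n n ℂ := ↑hM.eigenvectorUnitary
  have hdiag := hM.conjStarAlgAut_star_eigenvectorUnitary
  rw [Unitary.conjStarAlgAut_star_apply] at hdiag
  have hUM : star U * M = diagonal (RCLike.ofReal ∘ hM.eigenvalues) * star U := by
    rw [← hdiag, mul_assoc _ U, Unitary.mul_star_self_of_mem hM.eigenvectorUnitary.2, mul_one]
  rw [mulVec_mulVec, hUM, ← mulVec_mulVec, mulVec_diagonal]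
  rfl

lemma IsHermitian.re_star_dotProduct_mulVec (x : n → ℂ) :
    (star x ⬝ᵥ M *ᵥ x).re
      = ∑ i, hM.eigenvalues i * ‖(star (hM.eigenvectorUnitary : Matrix n n ℂ) *ᵥ x) i‖ ^ 2 := by
  rw [← star_star_mulVec_dotProduct_star_mulVec hM.eigenvectorUnitary.2, dotProduct,
    Complex.re_sum]
  refine Finset.sum_congr rfl fun i _ => ?_
  rw [hM.star_eigenvectorUnitary_mulVec_mulVec, Pi.star_apply, mul_left_comm,
    Complex.re_ofReal_mul, Complex.star_def, Complex.conj_mul', ← Complex.ofReal_pow,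
    Complex.ofReal_re]

lemma IsHermitian.sum_norm_sq_star_eigenvectorUnitary_mulVec (x : n → ℂ) :
    ∑ i, ‖(star (hM.eigenvectorUnitary : Matrix n n ℂ) *ᵥ x) i‖ ^ 2 = ∑ i, ‖x i‖ ^ 2 := by
  rw [← re_star_dotProduct_self, star_star_mulVec_dotProduct_star_mulVec hM.eigenvectorUnitary.2,
    re_star_dotProduct_self]

lemma IsHermitian.mul_sum_norm_sq_le_re_star_dotProduct_mulVec {c : ℝ}
    (hc : ∀ i, c ≤ hM.eigenvalues i) (x : n → ℂ) :
    c * ∑ i, ‖x i‖ ^ 2 ≤ (star x ⬝ᵥ M *ᵥ x).re := by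
  rw [hM.re_star_dotProduct_mulVec, ← hM.sum_norm_sq_star_eigenvectorUnitary_mulVec,
    Finset.mul_sum]
  gcongr with i
  exact hc i

lemma IsHermitian.re_star_dotProduct_mulVec_lt {c : ℝ} {x : n → ℂ} (hx : x ≠ 0)
    (hy : ∀ i, c ≤ hM.eigenvalues i →
      (star (hM.eigenvectorUnitary : Matrix n n ℂ) *ᵥ x) i = 0) :
    (star x ⬝ᵥ M *ᵥ x).re < c * ∑ i, ‖x i‖ ^ 2 := by
  set y := star (hM.eigenvectorUnitary : Matrix n n ℂ) *ᵥ x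
  obtain ⟨i₀, hi₀⟩ : ∃ i, y i ≠ 0 := by
    by_contra! h
    apply hx
    rw [← one_mulVec x, ← Unitary.mul_star_self_of_mem hM.eigenvectorUnitary.2, ← mulVec_mulVec]
    change _ *ᵥ y = 0
    rw [show y = 0 from funext h, mulVec_zero]
  rw [hM.re_star_dotProduct_mulVec, ← hM.sum_norm_sq_star_eigenvectorUnitary_mulVec,
    Finset.mul_sum]
  refine Finset.sum_lt_sum (fun i _ => ?_) ⟨i₀, Finset.mem_univ _, ?_⟩
  · by_cases hci : c ≤ hM.eigenvalues i
    · simp [y, hy i hci]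
    · exact mul_le_mul_of_nonneg_right (not_le.mp hci).le (by positivity)
  · exact mul_lt_mul_of_pos_right (not_le.mp (mt (hy i₀) hi₀)) (by positivity)

/-- The easy half of the Courant–Fischer min-max principle. -/
lemma IsHermitian.finrank_le_card_le_eigenvalues {c : ℝ} (V : Submodule ℂ (n → ℂ))
    (hV : ∀ x ∈ V, c * ∑ i, ‖x i‖ ^ 2 ≤ (star x ⬝ᵥ M *ᵥ x).re) :
    Module.finrank ℂ V ≤ Fintype.card {i // c ≤ hM.eigenvalues i} := by
  by_contra! hlt
  let f : V →ₗ[ℂ] {i // c ≤ hM.eigenvalues i} → ℂ :=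
    LinearMap.funLeft ℂ ℂ Subtype.val ∘ₗ
      mulVecLin (star (hM.eigenvectorUnitary : Matrix n n ℂ)) ∘ₗ V.subtype
  have hker : LinearMap.ker f ≠ ⊥ := LinearMap.ker_ne_bot_of_finrank_lt (by simpa using hlt)
  obtain ⟨x, hxker, hx0⟩ := Submodule.exists_mem_ne_zero_of_ne_bot hker
  have hy : ∀ i, c ≤ hM.eigenvalues i →
      (star (hM.eigenvectorUnitary : Matrix n n ℂ) *ᵥ (x : n → ℂ)) i = 0 :=
    fun i hi => congr_fun (LinearMap.mem_ker.mp hxker) ⟨i, hi⟩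
  exact (hV x x.2).not_gt (hM.re_star_dotProduct_mulVec_lt (by simpa using hx0) hy)

lemma IsHermitian.mul_re_star_dotProduct_mulVec_le {c : ℝ} (hc₀ : 0 ≤ c)
    (hc : ∀ i, c ≤ hM.eigenvalues i) (x : n → ℂ) :
    c * (star x ⬝ᵥ M *ᵥ x).re ≤ ∑ i, ‖(M *ᵥ x) i‖ ^ 2 := by
  rw [hM.re_star_dotProduct_mulVec, ← hM.sum_norm_sq_star_eigenvectorUnitary_mulVec,
    Finset.mul_sum]
  gcongr with i
  rw [hM.star_eigenvectorUnitary_mulVec_mulVec, norm_mul, Complex.norm_real, Real.norm_eq_abs,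
    abs_of_nonneg (hc₀.trans (hc i)), mul_pow, ← mul_assoc]
  gcongr
  rw [sq]
  exact mul_le_mul_of_nonneg_right (hc i) (hc₀.trans (hc i))

end IsHermitian

lemma sq_mul_sum_norm_sq_le_sum_norm_sq_mulVec {A : Matrix l n ℂ} {a : ℝ}
    (ha : ∀ i, a ^ 2 ≤ (isHermitian_conjTranspose_mul_self A).eigenvalues i) (x : n → ℂ) :
    a ^ 2 * ∑ i, ‖x i‖ ^ 2 ≤ ∑ i, ‖(A *ᵥ x) i‖ ^ 2 :=
  re_star_dotProduct_conjTranspose_mul_self_mulVec A x ▸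
    (isHermitian_conjTranspose_mul_self A).mul_sum_norm_sq_le_re_star_dotProduct_mulVec ha x

lemma sq_mul_sum_norm_sq_mulVec_le_sum_norm_sq_conjTranspose_mul_self_mulVec
    {A : Matrix l n ℂ} {b : ℝ}
    (hb : ∀ i, b ^ 2 ≤ (isHermitian_conjTranspose_mul_self A).eigenvalues i) (x : n → ℂ) :
    b ^ 2 * ∑ i, ‖(A *ᵥ x) i‖ ^ 2 ≤ ∑ i, ‖((Aᴴ * A) *ᵥ x) i‖ ^ 2 :=
  re_star_dotProduct_conjTranspose_mul_self_mulVec A x ▸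
    (isHermitian_conjTranspose_mul_self A).mul_re_star_dotProduct_mulVec_le (sq_nonneg b) hb x

lemma injective_mulVecLin_of_sq_le_eigenvalues {A : Matrix l n ℂ} {b : ℝ} (hb : 0 < b)
    (h : ∀ i, b ^ 2 ≤ (isHermitian_conjTranspose_mul_self A).eigenvalues i) :
    Function.Injective (mulVecLin A) := by
  refine LinearMap.ker_eq_bot.mp ((Submodule.eq_bot_iff _).mpr fun x hx => ?_)
  have hbound := sq_mul_sum_norm_sq_le_sum_norm_sq_mulVec h x
  rw [show A *ᵥ x = 0 from hx] at hbound
  have hsum : ∑ i, ‖x i‖ ^ 2 = 0 :=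
    le_antisymm (nonpos_of_mul_nonpos_right (by simpa using hbound) (by positivity))
      (by positivity)
  simpa [Finset.sum_eq_zero_iff_of_nonneg, funext_iff] using hsum

lemma card_le_card_sq_mul_le_eigenvalues_mul_conjTranspose [DecidableEq r]
    {Φ : Matrix l n ℂ} {Ψ : Matrix r n ℂ} {a b : ℝ} (hb : 0 < b)
    (hΦ : ∀ i, a ^ 2 ≤ (isHermitian_conjTranspose_mul_self Φ).eigenvalues i)
    (hΨ : ∀ i, b ^ 2 ≤ (isHermitian_conjTranspose_mul_self Ψ).eigenvalues i) :
    Fintype.card n ≤ Fintype.card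
      {j // (a * b) ^ 2 ≤ (isHermitian_conjTranspose_mul_self (Φ * Ψᴴ)).eigenvalues j} := by
  have hrange : Module.finrank ℂ (LinearMap.range (mulVecLin Ψ)) = Fintype.card n := by
    rw [LinearMap.finrank_range_of_inj (injective_mulVecLin_of_sq_le_eigenvalues hb hΨ),
      Module.finrank_fintype_fun_eq_card]
  rw [← hrange]
  refine (isHermitian_conjTranspose_mul_self _).finrank_le_card_le_eigenvalues _ ?_
  rintro _ ⟨v, rfl⟩
  rw [mulVecLin_apply, re_star_dotProduct_conjTranspose_mul_self_mulVec, mulVec_mulVec,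
    Matrix.mul_assoc, ← mulVec_mulVec]
  calc (a * b) ^ 2 * ∑ i, ‖(Ψ *ᵥ v) i‖ ^ 2
      = a ^ 2 * (b ^ 2 * ∑ i, ‖(Ψ *ᵥ v) i‖ ^ 2) := by ring
    _ ≤ a ^ 2 * ∑ i, ‖((Ψᴴ * Ψ) *ᵥ v) i‖ ^ 2 := by
      gcongr
      exact sq_mul_sum_norm_sq_mulVec_le_sum_norm_sq_conjTranspose_mul_self_mulVec hΨ v
    _ ≤ ∑ i, ‖(Φ *ᵥ (Ψᴴ * Ψ) *ᵥ v) i‖ ^ 2 := sq_mul_sum_norm_sq_le_sum_norm_sq_mulVec hΦ _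

end Matrix

lemma frob_eq_sqrt_sum_colNorm_sq {l m : Type*} [Fintype l] [Fintype m] (A : Matrix l m ℂ) :
    frob A = Real.sqrt (∑ j, colNorm A j ^ 2) := by
  rw [frob, Finset.sum_comm]
  congr 1
  exact Finset.sum_congr rfl fun j _ => (Real.sq_sqrt (by positivity)).symm

lemma sum_colNorm_mul_colNorm_le_frob_mul_frob {l r m : Type*} [Fintype l] [Fintype r]
    [Fintype m] (A : Matrix l m ℂ) (B : Matrix r m ℂ) :
    ∑ j, colNorm A j * colNorm B j ≤ frob A * frob B := by
  rw [frob_eq_sqrt_sum_colNorm_sq, frob_eq_sqrt_sum_colNorm_sq, ← Real.sqrt_mul (by positivity)]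
  exact Real.le_sqrt_of_sq_le (Finset.sum_mul_sq_le_sq_mul_sq _ _ _)

lemma sq_smin_le_eigenvalues {l : Type*} [Fintype l] {n : ℕ} (hn : 0 < n)
    (A : Matrix l (Fin n) ℂ) (i : Fin n) :
    smin hn A ^ 2 ≤ (isHermitian_conjTranspose_mul_self A).eigenvalues i := by
  rw [smin, Real.sq_sqrt
    (Finset.le_inf' _ _ fun j _ => eigenvalues_conjTranspose_mul_self_nonneg A j)]
  exact Finset.inf'_le _ (Finset.mem_univ i)

lemma inf'_colNorm_mul_colNorm_div_sq_le_smin_mul_smin {l r : Type*} [Fintype l] [Fintype r]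
    {k : ℕ} (hk : 0 < k) {t : ℝ} (ht : 0 < t)
    {Φ : Matrix l (Fin k) ℂ} {Ψ : Matrix r (Fin k) ℂ}
    (hΦ : frob Φ / (t * Real.sqrt k) ≤ smin hk Φ)
    (hΨ : frob Ψ / (t * Real.sqrt k) ≤ smin hk Ψ) :
    (Finset.univ.inf' (Finset.univ_nonempty_iff.mpr ⟨⟨0, hk⟩⟩)
        fun m => colNorm Φ m * colNorm Ψ m) / t ^ 2 ≤ smin hk Φ * smin hk Ψ := by
  set p := Finset.univ.inf' (Finset.univ_nonempty_iff.mpr ⟨⟨0, hk⟩⟩)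
    fun m => colNorm Φ m * colNorm Ψ m
  have hk' : (0 : ℝ) < k := Nat.cast_pos.mpr hk
  have hsqrt : 0 < t * Real.sqrt k := by positivity
  rw [div_le_iff₀ hsqrt] at hΦ hΨ
  have hp : k * p ≤ ∑ m, colNorm Φ m * colNorm Ψ m := by
    simpa using Finset.card_nsmul_le_sum Finset.univ _ p
      fun m _ => Finset.inf'_le _ (Finset.mem_univ m)
  have hfrob : frob Φ * frob Ψ ≤ k * (smin hk Φ * smin hk Ψ * t ^ 2) := by
    calc frob Φ * frob Ψ
        ≤ smin hk Φ * (t * Real.sqrt k) * (smin hk Ψ * (t * Real.sqrt k)) :=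
          mul_le_mul hΦ hΨ (Real.sqrt_nonneg _) (mul_nonneg (Real.sqrt_nonneg _) hsqrt.le)
      _ = k * (smin hk Φ * smin hk Ψ * t ^ 2) := by
          linear_combination smin hk Φ * smin hk Ψ * t ^ 2 * Real.sq_sqrt hk'.le
  rw [div_le_iff₀ (by positivity)]
  exact le_of_mul_le_mul_left
    (hp.trans ((sum_colNorm_mul_colNorm_le_frob_mul_frob Φ Ψ).trans hfrob)) hk'

lemma le_nthLargest_of_lt_card {n : ℕ} {f : Fin n → ℝ} {c : ℝ} {j : Fin n}
    (hj : (j : ℕ) < Fintype.card {i // c ≤ f i}) : c ≤ nthLargest f j := by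
  have hanti : Antitone ((f ∘ Tuple.sort f) ∘ Fin.rev) :=
    (Tuple.monotone_sort f).comp_antitone fun _ _ h => Fin.rev_le_rev.mpr h
  refine (Tuple.lt_card_ge_iff_apply_ge_of_antitone hanti).mp ?_
  rw [← Fintype.card_subtype]
  convert hj using 1
  exact Fintype.card_congr
    (Equiv.subtypeEquiv (Fin.revPerm.trans (Tuple.sort f)) fun i => by simp)

theorem stmt19_general (L R k : ℕ) (hk : 0 < k) (χ : ℝ) (hχ : 0 < χ)
    (Φ : Matrix (Fin L) (Fin k) ℂ) (Ψ : Matrix (Fin R) (Fin k) ℂ)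
    (hΦ : frob Φ / ((1 + χ) * Real.sqrt k) ≤ smin hk Φ)
    (hΨ : frob Ψ / ((1 + χ) * Real.sqrt k) ≤ smin hk Ψ) :
    ∀ j : Fin R, (j : ℕ) < k →
      (Finset.univ.inf' (Finset.univ_nonempty_iff.mpr ⟨⟨0, hk⟩⟩)
          fun m => colNorm Φ m * colNorm Ψ m) / (1 + χ) ^ 2 ≤
        nthLargest (sv (Φ * Ψᴴ)) j := by
  intro j hj
  set c := (Finset.univ.inf' (Finset.univ_nonempty_iff.mpr ⟨⟨0, hk⟩⟩)
    fun m => colNorm Φ m * colNorm Ψ m) / (1 + χ) ^ 2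
  have hc_le : c ≤ smin hk Φ * smin hk Ψ :=
    inf'_colNorm_mul_colNorm_div_sq_le_smin_mul_smin hk (by linarith) hΦ hΨ
  have hc_nonneg : 0 ≤ c :=
    div_nonneg (Finset.le_inf' _ _ fun m _ => by unfold colNorm; positivity) (sq_nonneg _)
  rcases hc_nonneg.eq_or_lt with hc0 | hc_pos
  · rw [← hc0]
    exact Real.sqrt_nonneg _
  have hΨ_pos : 0 < smin hk Ψ :=
    pos_of_mul_pos_right (hc_pos.trans_le hc_le) (Real.sqrt_nonneg _)
  refine le_nthLargest_of_lt_card (hj.trans_le ?_)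
  calc k = Fintype.card (Fin k) := (Fintype.card_fin k).symm
    _ ≤ _ := card_le_card_sq_mul_le_eigenvalues_mul_conjTranspose hΨ_pos
        (sq_smin_le_eigenvalues hk Φ) (sq_smin_le_eigenvalues hk Ψ)
    _ ≤ _ := Fintype.card_subtype_mono _ _ fun i hi =>
        Real.le_sqrt_of_sq_le ((pow_le_pow_left₀ hc_nonneg hc_le 2).trans hi)

/-- under the uniform overlap condition for both `Φ` and `Ψ`, each of the `k`
largest singular values of `Φ·Ψᴴ` is at least `p_min/(1+χ)²`, where
`p_min = min_m ‖Φ_{:,m}‖·‖Ψ_{:,m}‖`; in particular `s_k(Φ·Ψᴴ) ≥ p_min/(1+χ)²`. -/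
theorem stmt19 (L R k : ℕ) (hL : 0 < L) (hR : 0 < R) (hk : 0 < k) (χ : ℝ) (hχ : 0 < χ)
    (Φ : Matrix (Fin L) (Fin k) ℂ) (Ψ : Matrix (Fin R) (Fin k) ℂ)
    (hΦ : frob Φ / ((1 + χ) * Real.sqrt k) ≤ smin hk Φ)
    (hΨ : frob Ψ / ((1 + χ) * Real.sqrt k) ≤ smin hk Ψ) :
    ∀ j : Fin R, (j : ℕ) < k →
      (Finset.univ.inf' (Finset.univ_nonempty_iff.mpr ⟨⟨0, hk⟩⟩)
          fun m => colNorm Φ m * colNorm Ψ m) / (1 + χ) ^ 2 ≤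
        nthLargest (sv (Φ * Ψᴴ)) j :=
  stmt19_general L R k hk χ hχ Φ Ψ hΦ hΨ
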